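/- arXiv:1311.5705 — 3 statements merged into one kernel-verified Lean document; each statement's English description precedes it below -/
import Mathlib

section
/- Let M be a group, let t ∈ M, and let T be the normal closure of {t} in M (so T is a normal subgroup of M containing t). Suppose there exists φ ∈ M with φ * t * φ⁻¹ = t⁻¹. Then the quotient group T / ⁅T, M⁆ (the quotient of T by the commutator subgroup ⁅T, M⁆, which is a normal subgroup of M contained in T) is generated by the image of t, and this image has order dividing 2; in particular the quotient has at most 2 elements. -/
/-!
Modulo `⁅T, M⁆` conjugation by elements of `M` acts trivially on `T`, so every conjugate of `t`
has the same image as `t`; these conjugates generate `T`, hence the image of `t` generates the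
quotient. Since `φ` inverts `t`, we get `t ^ 2 = ⁅φ, t⁆⁻¹ ∈ ⁅T, M⁆`.
-/

open scoped commutatorElement

namespace Subgroup

variable {M : Type*} [Group M]

theorem mk_conj_eq_mk_in_quotient_commutator_top (H : Subgroup M) (g x : M) (hx : x ∈ H)
    (hgx : g * x * g⁻¹ ∈ H) :
    (QuotientGroup.mk ⟨g * x * g⁻¹, hgx⟩ : H ⧸ ⁅H, (⊤ : Subgroup M)⁆.subgroupOf H) =
      QuotientGroup.mk ⟨x, hx⟩ := by
  rw [QuotientGroup.eq, mem_subgroupOf, commutator_comm]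
  have hcomm : (g * x * g⁻¹)⁻¹ * x = ⁅g, x⁻¹⁆ := by group
  simpa only [coe_mul, coe_inv, hcomm] using
    commutator_mem_commutator (mem_top g) (inv_mem hx)

theorem mem_zpowers_in_quotient_commutator_top_normalClosure (t : M)
    (q : normalClosure {t} ⧸ ⁅normalClosure {t}, (⊤ : Subgroup M)⁆.subgroupOf
      (normalClosure {t})) :
    q ∈ zpowers (QuotientGroup.mk ⟨t, subset_normalClosure (Set.mem_singleton t)⟩) := by
  induction q using QuotientGroup.induction_on with | H x => ?_
  obtain ⟨x, hx⟩ := x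
  induction hx using closure_induction with
  | mem y hy =>
    obtain ⟨a, rfl, hconj⟩ := Group.mem_conjugatesOfSet_iff.mp hy
    obtain ⟨g, rfl⟩ := isConj_iff.mp hconj
    convert mem_zpowers _ using 1
    exact mk_conj_eq_mk_in_quotient_commutator_top _ g a _ _
  | one => exact one_mem _
  | mul _ _ _ _ iha ihb => exact mul_mem iha ihb
  | inv _ _ iha => exact inv_mem iha

theorem sq_mem_commutator_top_of_conj_eq_inv {H : Subgroup M} {t φ : M} (ht : t ∈ H)
    (hφ : φ * t * φ⁻¹ = t⁻¹) : t ^ 2 ∈ ⁅H, (⊤ : Subgroup M)⁆ := by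
  have hcomm : t ^ 2 = ⁅φ, t⁆⁻¹ := by
    rw [commutatorElement_def, hφ]
    group
  rw [hcomm, commutator_comm]
  exact inv_mem (commutator_mem_commutator (mem_top φ) ht)

end Subgroup

theorem Nat.card_le_of_forall_mem_zpowers_of_pow_eq_one {G : Type*} [Group G] {g : G}
    (hg : ∀ q, q ∈ Subgroup.zpowers g) {n : ℕ} (hn : 0 < n) (hgn : g ^ n = 1) :
    Nat.card G ≤ n := by
  rw [← Subgroup.card_top, ← (Subgroup.eq_top_iff' _).mpr hg, Nat.card_zpowers]
  exact orderOf_le_of_pow_eq_one hn hgn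

/-- Let `M` be a group, `t ∈ M`, and let `T` be the normal closure of `{t}` in `M`.
If some `φ ∈ M` conjugates `t` to `t⁻¹`, then the quotient `T / ⁅T, M⁆` is generated
by the image of `t`, this image has order dividing 2, and the quotient has at most
2 elements. -/
theorem normalClosure_quotient_commutator_generated_by_t_of_conj_inv
    {M : Type*} [Group M] (t φ : M) (hφ : φ * t * φ⁻¹ = t⁻¹) :
    (∀ q : (Subgroup.normalClosure {t} : Subgroup M) ⧸
        ((⁅Subgroup.normalClosure {t}, (⊤ : Subgroup M)⁆).subgroupOf
          (Subgroup.normalClosure {t})),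
      q ∈ Subgroup.zpowers
        ((QuotientGroup.mk
          (⟨t, Subgroup.subset_normalClosure (Set.mem_singleton t)⟩ :
            (Subgroup.normalClosure {t} : Subgroup M))) :
          (Subgroup.normalClosure {t} : Subgroup M) ⧸
            ((⁅Subgroup.normalClosure {t}, (⊤ : Subgroup M)⁆).subgroupOf
              (Subgroup.normalClosure {t})))) ∧
    ((QuotientGroup.mk
        (⟨t, Subgroup.subset_normalClosure (Set.mem_singleton t)⟩ :
          (Subgroup.normalClosure {t} : Subgroup M))) :
        (Subgroup.normalClosure {t} : Subgroup M) ⧸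
          ((⁅Subgroup.normalClosure {t}, (⊤ : Subgroup M)⁆).subgroupOf
            (Subgroup.normalClosure {t}))) ^ 2 = 1 ∧
    Nat.card ((Subgroup.normalClosure {t} : Subgroup M) ⧸
        ((⁅Subgroup.normalClosure {t}, (⊤ : Subgroup M)⁆).subgroupOf
          (Subgroup.normalClosure {t}))) ≤ 2 := by
  set T := Subgroup.normalClosure {t}
  have ht : t ∈ T := Subgroup.subset_normalClosure (Set.mem_singleton t)
  have hgen := Subgroup.mem_zpowers_in_quotient_commutator_top_normalClosure t
  have hsq : (QuotientGroup.mk ⟨t, ht⟩ : T ⧸ ⁅T, (⊤ : Subgroup M)⁆.subgroupOf T) ^ 2 = 1 := by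
    rw [← QuotientGroup.mk_pow, QuotientGroup.eq_one_iff, Subgroup.mem_subgroupOf]
    exact Subgroup.sq_mem_commutator_top_of_conj_eq_inv ht hφ
  exact ⟨hgen, hsq, Nat.card_le_of_forall_mem_zpowers_of_pow_eq_one hgen two_pos hsq⟩
end

section
/- Let M be a group, let t ∈ M, and let T be the normal closure of {t} in M. Suppose (i) there exists φ ∈ M with φ * t * φ⁻¹ = t⁻¹, and (ii) there exist g₁, g₂, g₃ ∈ M such that the product (g₁ * t * g₁⁻¹) * (g₂ * t * g₂⁻¹) * (g₃ * t * g₃⁻¹) lies in ⁅T, M⁆. Then T = ⁅T, M⁆, i.e. the quotient T / ⁅T, M⁆ is trivial. -/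
/-!
Modulo `⁅T, M⁆` every conjugate of `t` becomes equal to `t`, so the image `a` of `t` in
`M ⧸ ⁅T, M⁆` satisfies `a = a⁻¹` by (i) and `a ^ 3 = 1` by (ii). As `2` and `3` are coprime,
`a = 1`, i.e. `t ∈ ⁅T, M⁆`; since `T` is the normal closure of `t`, this forces `T ≤ ⁅T, M⁆`.
-/

namespace Subgroup

variable {M : Type*} [Group M]

theorem mk_conj_eq_mk_of_mem {H : Subgroup M} [H.Normal] {x : M} (hx : x ∈ H) (g : M) :
    ((g * x * g⁻¹ : M) : M ⧸ ⁅H, (⊤ : Subgroup M)⁆) = x := by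
  rw [QuotientGroup.eq_iff_div_mem, div_eq_mul_inv, commutator_comm]
  exact commutator_mem_commutator (mem_top g) hx

theorem normalClosure_singleton_eq_commutator_top_of_mem {t : M}
    (ht : t ∈ ⁅normalClosure {t}, (⊤ : Subgroup M)⁆) :
    normalClosure {t} = ⁅normalClosure {t}, (⊤ : Subgroup M)⁆ :=
  le_antisymm (normalClosure_le_normal (Set.singleton_subset_iff.mpr ht)) (commutator_le_left _ _)

end Subgroup

open Subgroup in
/-- Let `M` be a group, `t ∈ M`, and let `T` be the normal closure of `{t}` in `M`.
Suppose (i) some `φ ∈ M` conjugates `t` to `t⁻¹`, and (ii) there are `g₁ g₂ g₃ ∈ M`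
such that the product of the corresponding conjugates of `t` lies in `⁅T, M⁆`.
Then `T = ⁅T, M⁆`, i.e. the quotient `T / ⁅T, M⁆` is trivial. -/
theorem normalClosure_eq_commutator_of_conj_inv_of_three_conjugates
    {M : Type*} [Group M] (t φ : M) (hφ : φ * t * φ⁻¹ = t⁻¹)
    (h3 : ∃ g₁ g₂ g₃ : M,
      (g₁ * t * g₁⁻¹) * (g₂ * t * g₂⁻¹) * (g₃ * t * g₃⁻¹) ∈
        ⁅Subgroup.normalClosure {t}, (⊤ : Subgroup M)⁆) :
    Subgroup.normalClosure {t} = ⁅Subgroup.normalClosure {t}, (⊤ : Subgroup M)⁆ := by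
  apply normalClosure_singleton_eq_commutator_top_of_mem
  have hconj (g : M) := mk_conj_eq_mk_of_mem (subset_normalClosure (Set.mem_singleton t)) g
  have hsq : (t : M ⧸ ⁅normalClosure {t}, (⊤ : Subgroup M)⁆) ^ 2 = 1 := by
    rw [sq, mul_eq_one_iff_eq_inv, ← QuotientGroup.mk_inv, ← hφ, hconj]
  have hcube : (t : M ⧸ ⁅normalClosure {t}, (⊤ : Subgroup M)⁆) ^ 3 = 1 := by
    obtain ⟨g₁, g₂, g₃, hmem⟩ := h3
    rw [← QuotientGroup.eq_one_iff, QuotientGroup.mk_mul, QuotientGroup.mk_mul,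
      hconj, hconj, hconj] at hmem
    rwa [pow_three']
  rw [← QuotientGroup.eq_one_iff]
  exact (pow_eq_one_iff_of_coprime (by norm_num)).mp ⟨hsq, hcube⟩
end

section
/- Let V := (Fin 3 ⊕ Fin 3) → ZMod 2 with standard symplectic form ω(x, y) := x ⬝ᵥ (Matrix.J (Fin 3) (ZMod 2) *ᵥ y), and let Sp := Matrix.symplecticGroup (Fin 3) (ZMod 2) act on V by g • v := g.val *ᵥ v. Let R := MvPolynomial (Fin 3 ⊕ Fin 3) (ZMod 2) ⧸ I, where I is the ideal generated by the elements X i ^ 2 - X i, and define bar : V → R by bar v := (Σ_i (v i) • [X i]) + (Σ_{k : Fin 3} v (Sum.inl k) * v (Sum.inr k)) • 1. Let B² be the ZMod 2-submodule of R spanned by 1, the elements bar(e_i) for the standard basis vectors e_i of V, and the products bar(e_i) * bar(e_j) for i ≠ j. Suppose ρ : Sp →* RingAut R is a group homomorphism such that ρ(g) (bar v) = bar (g • v) for all g ∈ Sp and v ∈ V, and let N be the ZMod 2-submodule of R spanned by the set { ρ(g) m - m : g ∈ Sp, m ∈ B² }. Then for every nonzero v ∈ V, the element bar v - 1 lies in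 N. -/
/-!
For `v ≠ 0` some standard basis vector `b` has `ω(v, b) = 1`. The symplectic transvection
`τ_v : x ↦ x + ω(v, x) v` then sends `b` to `v + b`, and since `bar` is additive up to the
correction `ω(x, y) • 1`, the relation `ρ(τ_v)(bar b) - bar b` equals `bar v + 1 = bar v - 1`
in characteristic two.
-/

open Matrix

noncomputable section

/-- `V = H₁(Σ₃; ZMod 2)`, a 6-dimensional symplectic vector space over `ZMod 2`. -/
abbrev SympV : Type := (Fin 3 ⊕ Fin 3) → ZMod 2

/-- The standard symplectic form `ω(x, y) = x ⬝ᵥ (J *ᵥ y)`. -/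
def sympForm (x y : SympV) : ZMod 2 := x ⬝ᵥ (Matrix.J (Fin 3) (ZMod 2) *ᵥ y)

/-- The ideal generated by `X i ^ 2 - X i` for `i : Fin 3 ⊕ Fin 3`. -/
def boolIdeal : Ideal (MvPolynomial (Fin 3 ⊕ Fin 3) (ZMod 2)) :=
  Ideal.span (Set.range fun i : Fin 3 ⊕ Fin 3 =>
    MvPolynomial.X i ^ 2 - MvPolynomial.X i)

/-- The Boolean polynomial algebra `R` on six generators over `ZMod 2`. -/
abbrev BoolR : Type := MvPolynomial (Fin 3 ⊕ Fin 3) (ZMod 2) ⧸ boolIdeal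

/-- Johnson's map `bar : V → R`,
`v ↦ Σ_i (v i) • [X i] + (Σ_k v(inl k) * v(inr k)) • 1`. -/
def bar (v : SympV) : BoolR :=
  (∑ i : Fin 3 ⊕ Fin 3, (v i) • (Ideal.Quotient.mk boolIdeal (MvPolynomial.X i))) +
    (∑ k : Fin 3, v (Sum.inl k) * v (Sum.inr k)) • (1 : BoolR)

/-- `B²`: the `ZMod 2`-submodule of `R` spanned by `1`, the `bar (e i)` for the standard
basis vectors `e i`, and the products `bar (e i) * bar (e j)` for `i ≠ j`. -/
def Bsq : Submodule (ZMod 2) BoolR :=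
  Submodule.span (ZMod 2)
    ({(1 : BoolR)} ∪
      (Set.range fun i : Fin 3 ⊕ Fin 3 => bar (Pi.single i 1 : SympV)) ∪
      {x : BoolR | ∃ i j : Fin 3 ⊕ Fin 3, i ≠ j ∧
        x = bar (Pi.single i 1 : SympV) * bar (Pi.single j 1 : SympV)})

namespace Matrix

variable {l R : Type*} [Fintype l] [DecidableEq l] [CommRing R]

theorem dotProduct_J_mulVec_self (v : l ⊕ l → R) : v ⬝ᵥ (J l R *ᵥ v) = 0 := by
  simp [J, dotProduct, fromBlocks_mulVec, Fintype.sum_sum_type, neg_mulVec, mul_comm]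

theorem vecMulVec_self_mul_J_mul_vecMulVec_self (v : l ⊕ l → R) :
    vecMulVec v v * J l R * vecMulVec v v = 0 := by
  rw [vecMulVec_mul, vecMulVec_mul_vecMulVec, ← dotProduct_mulVec, dotProduct_J_mulVec_self,
    zero_smul, vecMulVec_zero]

theorem one_add_vecMulVec_self_mul_J_mem_symplecticGroup (v : l ⊕ l → R) :
    1 + vecMulVec v v * J l R ∈ symplecticGroup l R := by
  set P := vecMulVec v v
  rw [SymplecticGroup.mem_iff]
  calc (1 + P * J l R) * J l R * (1 + P * J l R)ᵀ
      = (1 + P * J l R) * J l R * (1 - J l R * P) := by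
        rw [transpose_add, transpose_one, transpose_mul, J_transpose, transpose_vecMulVec]
        noncomm_ring
    _ = J l R - J l R * J l R * P + P * (J l R * J l R) - P * (J l R * J l R) * J l R * P := by
        noncomm_ring
    _ = J l R + P * J l R * P := by rw [J_squared]; noncomm_ring
    _ = J l R := by rw [vecMulVec_self_mul_J_mul_vecMulVec_self, add_zero]

def symplecticTransvection (v : l ⊕ l → R) : symplecticGroup l R :=
  ⟨1 + vecMulVec v v * J l R, one_add_vecMulVec_self_mul_J_mem_symplecticGroup v⟩

theorem symplecticTransvection_mulVec (v x : l ⊕ l → R) :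
    (symplecticTransvection v).val *ᵥ x = x + (v ⬝ᵥ (J l R *ᵥ x)) • v := by
  rw [symplecticTransvection, add_mulVec, one_mulVec, ← mulVec_mulVec, vecMulVec_mulVec,
    op_smul_eq_smul]

theorem J_mulVec_single_inl (k : l) :
    J l R *ᵥ Pi.single (Sum.inl k) 1 = Pi.single (Sum.inr k) 1 := by
  ext (i | i) <;> simp [J, mulVec_single, Pi.single_apply, one_apply]

theorem J_mulVec_single_inr (k : l) :
    J l R *ᵥ Pi.single (Sum.inr k) 1 = -Pi.single (Sum.inl k) 1 := by
  ext (i | i) <;> simp [J, mulVec_single, Pi.single_apply, one_apply]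

end Matrix

theorem exists_sympForm_single_eq_one {v : SympV} (hv : v ≠ 0) :
    ∃ i, sympForm v (Pi.single i 1) = 1 := by
  obtain ⟨j, hj⟩ := Function.ne_iff.mp hv
  have hvj : v j = 1 := Fin.eq_one_of_ne_zero (v j) hj
  rcases j with k | k
  · refine ⟨Sum.inr k, ?_⟩
    rw [sympForm, J_mulVec_single_inr, dotProduct_neg, dotProduct_single_one, hvj]
    rfl
  · exact ⟨Sum.inl k, by rw [sympForm, J_mulVec_single_inl, dotProduct_single_one, hvj]⟩

theorem sum_inl_mul_inr_add (x y : SympV) :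
    ∑ k : Fin 3, (x + y) (Sum.inl k) * (x + y) (Sum.inr k) =
      ∑ k : Fin 3, x (Sum.inl k) * x (Sum.inr k) + ∑ k : Fin 3, y (Sum.inl k) * y (Sum.inr k) +
        sympForm x y := by
  simp only [sympForm, J, dotProduct, fromBlocks_mulVec, Fintype.sum_sum_type, neg_mulVec,
    Pi.add_apply, ← Finset.sum_add_distrib, zero_mulVec, one_mulVec, zero_add, add_zero,
    Sum.elim_inl, Sum.elim_inr, Pi.neg_apply, Function.comp_apply, ZMod.neg_eq_self_mod_two]
  exact Finset.sum_congr rfl fun k _ => by ring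

theorem bar_add (x y : SympV) : bar (x + y) = bar x + bar y + sympForm x y • (1 : BoolR) := by
  rw [bar, sum_inl_mul_inr_add]
  simp only [bar, Pi.add_apply, add_smul, Finset.sum_add_distrib]
  abel

theorem bar_single_mem_Bsq (i : Fin 3 ⊕ Fin 3) : bar (Pi.single i 1) ∈ Bsq :=
  Submodule.subset_span (Or.inl (Or.inr ⟨i, rfl⟩))

/-- First step of the paper's Lemma: for every nonzero `v ∈ V`, `bar v - 1` lies in the
submodule `N` spanned by the elements `ρ(g) m - m` with `m ∈ B²`; i.e. all degree-1
monomials equal the constant `1` in the coinvariants. -/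
theorem bar_sub_one_mem_span_coinvariant_relations
    (ρ : Matrix.symplecticGroup (Fin 3) (ZMod 2) →* RingAut BoolR)
    (hρ : ∀ (g : Matrix.symplecticGroup (Fin 3) (ZMod 2)) (v : SympV),
      ρ g (bar v) = bar (g.val *ᵥ v)) :
    ∀ v : SympV, v ≠ 0 →
      bar v - 1 ∈ Submodule.span (ZMod 2)
        {x : BoolR | ∃ (g : Matrix.symplecticGroup (Fin 3) (ZMod 2)) (m : BoolR),
          m ∈ Bsq ∧ x = ρ g m - m} := by
  intro v hv
  obtain ⟨i, hvb⟩ := exists_sympForm_single_eq_one hv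
  set b : SympV := Pi.single i 1
  have hτb : (symplecticTransvection v).val *ᵥ b = v + b := by
    rw [symplecticTransvection_mulVec, ← sympForm, hvb, one_smul, add_comm]
  have hrel : ρ (symplecticTransvection v) (bar b) - bar b = bar v - 1 := by
    rw [hρ, hτb, bar_add, hvb, one_smul, add_right_comm, add_sub_cancel_right,
      ZModModule.sub_eq_add]
  exact Submodule.subset_span ⟨_, _, bar_single_mem_Bsq i, hrel.symm⟩

end
end
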